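/- arXiv:2009.00971 — 3 statements merged into one kernel-verified Lean document; each statement's English description precedes it below -/
import Mathlib

section
/- Every system of d linear equations with integer coefficients of binary length at most s that has a solution over the non-negative integers has such a solution with at most O(s·d·log d) non-zero components (Integer Carathéodory theorem of Eisenbrand–Shmonin); in particular, for a system of d equations with all coefficients equal to 0 or 1, there is a solution whose support has size polynomially bounded in d. -/
/-!
Pigeonhole (Eisenbrand–Shmonin): if a solution `x` has more than `K` non-zero entries, with
`(2 (K + 1) B + 1)^d < 2^(K + 1)` and all entries of the `d × n` matrix bounded by `B`, then
two distinct sets `U₁, U₂` of `K + 1` support columns have the same column sums. Moving the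
smallest value of `x` on `U₁ \ U₂` over to `U₂ \ U₁` keeps `x` a non-negative solution and
shrinks its support, so a solution of minimal support has at most `K` non-zero entries.
For entries of size `2^s`, `K = 16 (s + 1) d (log₂ d + 1)` is large enough.
-/

open Finset

section

variable {ι κ : Type*} {A : ι → κ → ℤ}

theorem exists_ne_subsets_sum_eq_of_natAbs_le [Fintype ι] [DecidableEq ι] {B : ℕ}
    (hA : ∀ i j, (A i j).natAbs ≤ B) {T : Finset κ}
    (hT : (2 * #T * B + 1) ^ Fintype.card ι < 2 ^ #T) :
    ∃ U₁ ⊆ T, ∃ U₂ ⊆ T, U₁ ≠ U₂ ∧ ∀ i, ∑ j ∈ U₁, A i j = ∑ j ∈ U₂, A i j := by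
  set c : ℤ := #T * B
  have hmaps : ∀ U ∈ T.powerset,
      (fun i => ∑ j ∈ U, A i j) ∈ Fintype.piFinset fun _ : ι => Icc (-c) c := by
    intro U hU
    simp only [Fintype.mem_piFinset, mem_Icc, ← abs_le]
    intro i
    calc |∑ j ∈ U, A i j| ≤ ∑ j ∈ U, |A i j| := abs_sum_le_sum_abs _ _
      _ ≤ #U • (B : ℤ) := sum_le_card_nsmul _ _ _ fun j _ => by
          rw [Int.abs_eq_natAbs]; exact_mod_cast hA i j
      _ ≤ #T * B := by
          rw [nsmul_eq_mul]
          gcongr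
          exact mem_powerset.1 hU
  have hcard : #(Fintype.piFinset fun _ : ι => Icc (-c) c) < #T.powerset := by
    rw [Fintype.card_piFinset, prod_const, Int.card_Icc, card_powerset, card_univ]
    have hc : c + 1 - -c = (2 * #T * B + 1 : ℕ) := by push_cast; ring
    rwa [hc, Int.toNat_natCast]
  obtain ⟨U₁, hU₁, U₂, hU₂, hne, heq⟩ := exists_ne_map_eq_of_card_lt_of_maps_to hcard hmaps
  exact ⟨U₁, mem_powerset.1 hU₁, U₂, mem_powerset.1 hU₂, hne, congrFun heq⟩

theorem exists_solution_support_ssubset [Fintype κ] [DecidableEq κ] {b : ι → ℤ} {x : κ → ℕ}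
    (hx : ∀ i, ∑ j, A i j * x j = b i) {P Q : Finset κ} (hPQ : Disjoint P Q)
    (hP : P.Nonempty) (hPQx : P ∪ Q ⊆ ({j | x j ≠ 0} : Finset κ))
    (hsum : ∀ i, ∑ j ∈ P, A i j = ∑ j ∈ Q, A i j) :
    ∃ y : κ → ℕ, (∀ i, ∑ j, A i j * y j = b i) ∧
      ({j | y j ≠ 0} : Finset κ) ⊂ ({j | x j ≠ 0} : Finset κ) := by
  obtain ⟨j₀, hj₀, hmin⟩ := P.exists_min_image x hP
  set m := x j₀
  let y : κ → ℕ := fun j => if j ∈ P then x j - m else if j ∈ Q then x j + m else x j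
  have hy : ∀ j, (y j : ℤ) = x j + m * ((if j ∈ Q then 1 else 0) - (if j ∈ P then 1 else 0)) := by
    intro j
    by_cases hjP : j ∈ P
    · have hjQ : j ∉ Q := disjoint_left.1 hPQ hjP
      simp [y, hjP, hjQ, Nat.cast_sub (hmin j hjP)]
      ring
    · by_cases hjQ : j ∈ Q <;> simp [y, hjP, hjQ]
  refine ⟨y, fun i => ?_, ?_⟩
  · simp only [hy, mul_add, sum_add_distrib, hx, mul_sub, mul_ite, mul_one, mul_zero]
    simp only [sum_sub_distrib, sum_ite_mem, univ_inter]
    rw [← sum_mul, ← sum_mul, hsum, sub_self, add_zero]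
  · have hPx : ∀ j ∈ P, x j ≠ 0 := fun j hj => by simpa using hPQx (mem_union_left Q hj)
    have hQx : ∀ j ∈ Q, x j ≠ 0 := fun j hj => by simpa using hPQx (mem_union_right P hj)
    have hsub : ({j | y j ≠ 0} : Finset κ) ⊆ ({j | x j ≠ 0} : Finset κ) := fun j => by
      simp only [mem_filter, mem_univ, true_and]
      by_cases hjP : j ∈ P
      · exact fun _ => hPx j hjP
      by_cases hjQ : j ∈ Q
      · exact fun _ => hQx j hjQ
      simp [y, hjP, hjQ]
    exact (ssubset_iff_of_subset hsub).2 ⟨j₀, by simpa using hPx j₀ hj₀, by simp [y, hj₀, m]⟩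

theorem exists_solution_card_support_lt [Fintype ι] [DecidableEq ι] [Fintype κ] [DecidableEq κ]
    {B K : ℕ} (hA : ∀ i j, (A i j).natAbs ≤ B)
    (hK : (2 * (K + 1) * B + 1) ^ Fintype.card ι < 2 ^ (K + 1)) {b : ι → ℤ} {x : κ → ℕ}
    (hx : ∀ i, ∑ j, A i j * x j = b i) (hxK : K < #{j | x j ≠ 0}) :
    ∃ y : κ → ℕ, (∀ i, ∑ j, A i j * y j = b i) ∧ #{j | y j ≠ 0} < #{j | x j ≠ 0} := by
  obtain ⟨T, hTx, hT⟩ := exists_subset_card_eq hxK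
  obtain ⟨U₁, hU₁, U₂, hU₂, hne, hsum⟩ :=
    exists_ne_subsets_sum_eq_of_natAbs_le hA (T := T) (hT ▸ hK)
  wlog hU : (U₁ \ U₂).Nonempty generalizing U₁ U₂
  · rw [not_nonempty_iff_eq_empty, sdiff_eq_empty_iff_subset] at hU
    exact this U₂ hU₂ U₁ hU₁ hne.symm (fun i => (hsum i).symm)
      (sdiff_nonempty.2 fun h => hne (hU.antisymm h))
  have hsupp : U₁ \ U₂ ∪ U₂ \ U₁ ⊆ ({j | x j ≠ 0} : Finset κ) :=
    union_subset (sdiff_subset.trans (hU₁.trans hTx)) (sdiff_subset.trans (hU₂.trans hTx))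
  obtain ⟨y, hy, hyx⟩ := exists_solution_support_ssubset hx disjoint_sdiff_sdiff hU hsupp
    fun i => sum_sdiff_eq_sum_sdiff_iff.2 (hsum i)
  exact ⟨y, hy, card_lt_card hyx⟩

theorem exists_solution_card_support_le [Fintype ι] [DecidableEq ι] [Fintype κ] [DecidableEq κ]
    {B K : ℕ} (hA : ∀ i j, (A i j).natAbs ≤ B)
    (hK : (2 * (K + 1) * B + 1) ^ Fintype.card ι < 2 ^ (K + 1)) {b : ι → ℤ}
    (hsol : ∃ x : κ → ℕ, ∀ i, ∑ j, A i j * x j = b i) :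
    ∃ x : κ → ℕ, (∀ i, ∑ j, A i j * x j = b i) ∧ #{j | x j ≠ 0} ≤ K := by
  obtain ⟨x, hx, hmin⟩ :=
    (measure fun x : κ → ℕ => #{j | x j ≠ 0}).wf.has_min {x | ∀ i, ∑ j, A i j * x j = b i} hsol
  refine ⟨x, hx, not_lt.1 fun hxK => ?_⟩
  obtain ⟨y, hy, hyx⟩ := exists_solution_card_support_lt hA hK hx hxK
  exact hmin y hy hyx

end

theorem two_mul_succ_mul_two_pow_add_one_pow_lt (d s : ℕ) :
    (2 * (16 * (s + 1) * d * (Nat.log 2 d + 1) + 1) * 2 ^ s + 1) ^ d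
      < 2 ^ (16 * (s + 1) * d * (Nat.log 2 d + 1) + 1) := by
  set L := Nat.log 2 d
  set K := 16 * (s + 1) * d * (L + 1)
  have hK : K ≤ 2 ^ (s + 2 * L + 5) := calc
    16 * (s + 1) * d * (L + 1) ≤ 2 ^ 4 * 2 ^ s * 2 ^ (L + 1) * 2 ^ L := by
      gcongr
      · norm_num
      · exact Nat.lt_two_pow_self
      · exact (Nat.lt_pow_succ_log_self one_lt_two d).le
      · exact Nat.lt_two_pow_self
    _ = 2 ^ (s + 2 * L + 5) := by ring
  have hbase : 2 * (K + 1) * 2 ^ s + 1 ≤ 2 ^ (2 * s + 2 * L + 8) := by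
    have hP : 1 ≤ 2 ^ (s + 2 * L + 5) := Nat.one_le_two_pow
    have hQ : 1 ≤ 2 ^ s := Nat.one_le_two_pow
    rw [show 2 ^ (2 * s + 2 * L + 8) = 8 * 2 ^ (s + 2 * L + 5) * 2 ^ s by ring]
    nlinarith
  have hexp : (2 * s + 2 * L + 8) * d ≤ K := by
    have : 2 * s + 2 * L + 8 ≤ 16 * (s + 1) * (L + 1) := by nlinarith
    calc (2 * s + 2 * L + 8) * d ≤ 16 * (s + 1) * (L + 1) * d := by gcongr
      _ = K := by ring
  calc (2 * (K + 1) * 2 ^ s + 1) ^ d ≤ (2 ^ (2 * s + 2 * L + 8)) ^ d := by gcongr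
    _ = 2 ^ ((2 * s + 2 * L + 8) * d) := (pow_mul ..).symm
    _ ≤ 2 ^ K := Nat.pow_le_pow_right two_pos hexp
    _ < 2 ^ (K + 1) := Nat.pow_lt_pow_right one_lt_two K.lt_succ_self

theorem integer_caratheodory :
    (∃ C : ℕ, ∀ (d n s : ℕ) (A : Fin d → Fin n → ℤ) (b : Fin d → ℤ),
      (∀ i j, (A i j).natAbs ≤ 2 ^ s) →
      (∃ x : Fin n → ℕ, ∀ i, ∑ j, A i j * (x j : ℤ) = b i) →
      ∃ x : Fin n → ℕ, (∀ i, ∑ j, A i j * (x j : ℤ) = b i) ∧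
        (Finset.univ.filter fun j => x j ≠ 0).card ≤
          C * (s + 1) * d * (Nat.log 2 d + 1)) ∧
    (∃ C : ℕ, ∀ (d n : ℕ) (A : Fin d → Fin n → ℤ) (b : Fin d → ℤ),
      (∀ i j, A i j = 0 ∨ A i j = 1) →
      (∃ x : Fin n → ℕ, ∀ i, ∑ j, A i j * (x j : ℤ) = b i) →
      ∃ x : Fin n → ℕ, (∀ i, ∑ j, A i j * (x j : ℤ) = b i) ∧
        (Finset.univ.filter fun j => x j ≠ 0).card ≤
          C * d * (Nat.log 2 d + 1)) := by
  have hbounded : ∀ (d n s : ℕ) (A : Fin d → Fin n → ℤ) (b : Fin d → ℤ),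
      (∀ i j, (A i j).natAbs ≤ 2 ^ s) →
      (∃ x : Fin n → ℕ, ∀ i, ∑ j, A i j * (x j : ℤ) = b i) →
      ∃ x : Fin n → ℕ, (∀ i, ∑ j, A i j * (x j : ℤ) = b i) ∧
        #{j | x j ≠ 0} ≤ 16 * (s + 1) * d * (Nat.log 2 d + 1) := by
    intro d n s A b hA hsol
    refine exists_solution_card_support_le hA ?_ hsol
    rw [Fintype.card_fin]
    exact two_mul_succ_mul_two_pow_add_one_pow_lt d s
  refine ⟨⟨16, hbounded⟩, 16, fun d n A b hA hsol => ?_⟩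
  have hA₀ : ∀ i j, (A i j).natAbs ≤ 2 ^ 0 := fun i j => by rcases hA i j with h | h <;> simp [h]
  simpa using hbounded d n 0 A b hA₀ hsol
end

section
/- In the one-step logic of a coalgebraic modal logic, a one-step pair (φ, η) over V is satisfiable iff it is satisfiable by a one-step model whose carrier is the set of valuations V → 2 satisfying η, with the canonical valuation τ(a) = {κ | κ(a) = ⊤}. -/
structure SetFunctor where
  Obj : Type → Type
  map : {X Y : Type} → (X → Y) → Obj X → Obj Y
  map_id : ∀ (X : Type) (t : Obj X), map (id : X → X) t = t
  map_comp : ∀ {X Y Z : Type} (f : X → Y) (g : Y → Z) (t : Obj X),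
    map (g ∘ f) t = map g (map f t)

/-- A one-step model `(X, τ, t)` satisfies the one-step pair given by the
modal conjunctive clause `lits` (a list of signed modal literals `±♥a`)
and the propositional formula `η` (given by its set of satisfying
valuations). -/
def OneStepSat (T : SetFunctor) {Λ V : Type}
    (lift : Λ → (X : Type) → Set X → Set (T.Obj X))
    (lits : List (Bool × Λ × V)) (η : (V → Prop) → Prop)
    (X : Type) (τ : V → Set X) (t : T.Obj X) : Prop :=
  (∀ x : X, η fun a => x ∈ τ a) ∧
  ∀ l ∈ lits, (l.1 = true ↔ t ∈ lift l.2.1 X (τ l.2.2))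

/-!
Any one-step model `(Y, θ, s)` maps to the canonical carrier by sending a point to the
valuation it induces, `y ↦ (a ↦ y ∈ θ a)`. The canonical valuation pulls back to `θ` along this
map, so naturality of the predicate liftings transports every modal literal from `s` to its
image under `T`.
-/

theorem OneStepSat.map {T : SetFunctor} {Λ V : Type}
    {lift : Λ → (X : Type) → Set X → Set (T.Obj X)}
    (natural : ∀ (h : Λ) {X Y : Type} (f : X → Y) (B : Set Y),
      lift h X (f ⁻¹' B) = T.map f ⁻¹' lift h Y B)
    {lits : List (Bool × Λ × V)} {η : (V → Prop) → Prop} {X Y : Type} (f : Y → X)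
    {τ : V → Set X} (hτ : ∀ x : X, η fun a => x ∈ τ a) {s : T.Obj Y}
    (hs : OneStepSat T lift lits η Y (fun a => f ⁻¹' τ a) s) :
    OneStepSat T lift lits η X τ (T.map f s) :=
  ⟨hτ, fun l hl => (hs.2 l hl).trans (by rw [natural]; rfl)⟩

theorem one_step_canonical_model (T : SetFunctor) {Λ V : Type}
    (lift : Λ → (X : Type) → Set X → Set (T.Obj X))
    (natural : ∀ (h : Λ) {X Y : Type} (f : X → Y) (B : Set Y),
      lift h X (f ⁻¹' B) = T.map f ⁻¹' lift h Y B)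
    (lits : List (Bool × Λ × V)) (η : (V → Prop) → Prop) :
    (∃ (X : Type) (τ : V → Set X) (t : T.Obj X),
        OneStepSat T lift lits η X τ t) ↔
    (∃ t : T.Obj {κ : V → Prop // η κ},
        OneStepSat T lift lits η {κ : V → Prop // η κ}
          (fun a => {κ | κ.1 a}) t) := by
  constructor
  · rintro ⟨Y, θ, s, hs⟩
    let valuationAt : Y → {κ : V → Prop // η κ} := fun y => ⟨fun a => y ∈ θ a, hs.1 y⟩
    exact ⟨_, hs.map natural valuationAt fun κ => κ.2⟩
  · rintro ⟨t, ht⟩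
    exact ⟨_, _, t, ht⟩
end

section
/- The Presburger one-step pair (♯a + ♯b − ♯c > 0, η) is one-step satisfiable iff η is propositionally consistent with (a∧b) ∨ (a∧¬c) ∨ (b∧¬c). -/
/-!
A one-step model makes `♯a + ♯b − ♯c` positive only if some point of positive weight does:
otherwise the three sums compare the other way pointwise. For a point of weight `n > 0` whose
valuation is `(p, q, r)`, this quantity is `n * ([p] + [q] − [r])`, which is positive exactly
when `(a∧b) ∨ (a∧¬c) ∨ (b∧¬c)` holds at `(p, q, r)`. Conversely, a single point of weight one
carrying a satisfying valuation is a model.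
-/

/-- Total weight of a finite multiset `μ` on the set `A`. -/
noncomputable def meas {X : Type*} (μ : X →₀ ℕ) (A : Set X) : ℕ :=
  ∑ x ∈ μ.support, Set.indicator A (⇑μ) x

theorem Bool.toNat_lt_toNat_add_toNat_iff (p q r : Bool) :
    r.toNat < p.toNat + q.toNat ↔ ((p && q) || (p && !r) || (q && !r)) = true := by
  cases p <;> cases q <;> cases r <;> decide

section

variable {X : Type*}

theorem exists_mem_support_indicator_lt_of_meas_lt {μ : X →₀ ℕ} {A B C : Set X}
    (h : meas μ C < meas μ A + meas μ B) :
    ∃ x ∈ μ.support, C.indicator μ x < A.indicator μ x + B.indicator μ x := by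
  unfold meas at h
  rw [← Finset.sum_add_distrib] at h
  exact Finset.exists_lt_of_sum_lt h

theorem Set.indicator_eq_toNat_mul {f : X → ℕ} {A : Set X} {x : X} {p : Bool}
    (hp : p = true ↔ x ∈ A) : A.indicator f x = p.toNat * f x := by
  cases p
  · simp [Set.indicator_of_notMem (mt hp.2 Bool.false_ne_true)]
  · simp [Set.indicator_of_mem (hp.1 rfl)]

theorem meas_single (x : X) (n : ℕ) (A : Set X) :
    meas (Finsupp.single x n) A = A.indicator (fun _ => n) x := by
  classical
  rcases eq_or_ne n 0 with rfl | hn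
  · simp [meas]
  · simp [meas, hn, Set.indicator_apply]

end

theorem presburger_one_step_pair_sat_iff (η : Bool → Bool → Bool → Prop) :
    (∃ (X : Type) (τa τb τc : Set X) (μ : X →₀ ℕ),
        (∀ x : X, ∃ p q r : Bool,
          (p = true ↔ x ∈ τa) ∧ (q = true ↔ x ∈ τb) ∧ (r = true ↔ x ∈ τc) ∧
          η p q r) ∧
        (meas μ τa : ℤ) + (meas μ τb : ℤ) - (meas μ τc : ℤ) > 0) ↔
    (∃ p q r : Bool, η p q r ∧ ((p && q) || (p && !r) || (q && !r)) = true) := by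
  constructor
  · rintro ⟨X, τa, τb, τc, μ, hval, hpos⟩
    obtain ⟨x, -, hlt⟩ :=
      exists_mem_support_indicator_lt_of_meas_lt (show meas μ τc < meas μ τa + meas μ τb by omega)
    obtain ⟨p, q, r, hp, hq, hr, hη⟩ := hval x
    rw [Set.indicator_eq_toNat_mul hp, Set.indicator_eq_toNat_mul hq,
      Set.indicator_eq_toNat_mul hr, ← add_mul] at hlt
    exact ⟨p, q, r, hη, (Bool.toNat_lt_toNat_add_toNat_iff p q r).1 (Nat.lt_of_mul_lt_mul_right hlt)⟩
  · rintro ⟨p, q, r, hη, hpqr⟩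
    refine ⟨Unit, {_x | p = true}, {_x | q = true}, {_x | r = true}, Finsupp.single () 1,
      fun _ => ⟨p, q, r, Iff.rfl, Iff.rfl, Iff.rfl, hη⟩, ?_⟩
    have hcount (s : Bool) : meas (Finsupp.single () 1) {_x | s = true} = s.toNat := by
      rw [meas_single, Set.indicator_eq_toNat_mul (A := {_x : Unit | s = true}) (x := ()) Iff.rfl,
        mul_one]
    rw [hcount, hcount, hcount]
    have := (Bool.toNat_lt_toNat_add_toNat_iff p q r).2 hpqr
    omega
end
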